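/- Let α ∈ (0,1) and K(x) = |x|^{α/2} e^{−|x|^{α/2}/2}. Then there is a constant c depending only on α such that ∫_{|x|<2} ( ∫_{|y|<|x|/2} |K(x−y) − K(x)| |y|^{−1−α} dy )² dx ≤ c. -/

import Mathlib

open MeasureTheory Set

/-!
`Kfun α x = k (|x|)` for the profile `k t = t^β e^{-t^β/2}`, `β = α/2`, whose derivative
`β t^{β-1} e^{-t^β/2} (1 - t^β/2)` is at most `β t^{β-1}` in absolute value. Since
`|x - y| ≥ |x|/2` on the inner region, the mean value theorem gives
`|K(x-y) - K(x)| ≤ (α/2) (|x|/2)^{α/2-1} |y|`, so the inner integral is bounded by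
`∫_{|y|<|x|/2} |y|^{-α} ≍ |x|^{1-α}` times that constant, i.e. by a multiple of `|x|^{-α/2}`.
Its square is a multiple of `|x|^{-α}`, integrable on `|x| < 2` because `α < 1`;
the constants combine to `c = 4α²/(1-α)³`.
-/

noncomputable def Kfun (α : ℝ) (x : ℝ) : ℝ :=
  |x| ^ (α / 2) * Real.exp (-(1 / 2) * |x| ^ (α / 2))

lemma setIntegral_abs_rpow_abs_lt {r s : ℝ} (hr : 0 ≤ r) (hs : -1 < s) :
    ∫ y in {y : ℝ | |y| < r}, |y| ^ s = 2 * (r ^ (s + 1) / (s + 1)) := by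
  have hradial : {y : ℝ | |y| < r}.indicator (fun y => |y| ^ s) =
      fun y => (Iio r).indicator (fun t => t ^ s) |y| :=
    funext fun _ => indicator_comp_right (s := Iio r) (g := fun t => t ^ s) (fun y : ℝ => |y|)
  rw [← integral_indicator (measurableSet_lt measurable_abs measurable_const), hradial,
    integral_comp_abs, integral_indicator measurableSet_Iio,
    Measure.restrict_restrict measurableSet_Iio, Iio_inter_Ioi, ← integral_Ioc_eq_integral_Ioo,
    ← intervalIntegral.integral_of_le hr, integral_rpow (Or.inl hs), Real.zero_rpow (by linarith),
    sub_zero]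

lemma integrableOn_abs_rpow_abs_lt {r s : ℝ} (hr : 0 < r) (hs : -1 < s) :
    IntegrableOn (fun y : ℝ => |y| ^ s) {y : ℝ | |y| < r} :=
  .of_integral_ne_zero <| by
    rw [setIntegral_abs_rpow_abs_lt hr.le hs]
    have : 0 < s + 1 := by linarith
    positivity

lemma exp_neg_half_mul_abs_one_sub_half_le_one {u : ℝ} (hu : 0 ≤ u) :
    Real.exp (-(1 / 2) * u) * |1 - u / 2| ≤ 1 :=
  calc Real.exp (-(1 / 2) * u) * |1 - u / 2|
      ≤ Real.exp (-(1 / 2) * u) * Real.exp (u / 2) := by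
        gcongr
        rw [abs_le]
        constructor <;> linarith [Real.add_one_le_exp (u / 2)]
    _ = 1 := by rw [← Real.exp_add, show -(1 / 2) * u + u / 2 = 0 by ring, Real.exp_zero]

lemma hasDerivAt_rpow_mul_exp_neg_half_rpow (β : ℝ) {t : ℝ} (ht : 0 < t) :
    HasDerivAt (fun t => t ^ β * Real.exp (-(1 / 2) * t ^ β))
      (β * t ^ (β - 1) * (Real.exp (-(1 / 2) * t ^ β) * (1 - t ^ β / 2))) t := by
  have hpow := Real.hasDerivAt_rpow_const (p := β) (Or.inl ht.ne')
  exact (hpow.mul (hpow.const_mul (-(1 / 2) : ℝ)).exp).congr_deriv (by ring)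

lemma abs_Kfun_sub_le {α x y : ℝ} (hα₀ : 0 ≤ α) (hα₂ : α ≤ 2) (hx : x ≠ 0)
    (hy : |y| ≤ |x| / 2) :
    |Kfun α (x - y) - Kfun α x| ≤ α / 2 * (|x| / 2) ^ (α / 2 - 1) * |y| := by
  have hr : 0 < |x| / 2 := by positivity
  have hderiv_le : ∀ t ∈ Ici (|x| / 2), ‖α / 2 * t ^ (α / 2 - 1) *
      (Real.exp (-(1 / 2) * t ^ (α / 2)) * (1 - t ^ (α / 2) / 2))‖
        ≤ α / 2 * (|x| / 2) ^ (α / 2 - 1) := by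
    intro t (ht : |x| / 2 ≤ t)
    have ht₀ : 0 < t := hr.trans_le ht
    rw [Real.norm_eq_abs, abs_mul, abs_of_nonneg (by positivity : 0 ≤ α / 2 * t ^ (α / 2 - 1)),
      abs_mul, abs_of_pos (Real.exp_pos _)]
    calc α / 2 * t ^ (α / 2 - 1) * (Real.exp (-(1 / 2) * t ^ (α / 2)) * |1 - t ^ (α / 2) / 2|)
        ≤ α / 2 * t ^ (α / 2 - 1) * 1 := by
          gcongr
          exact exp_neg_half_mul_abs_one_sub_half_le_one (by positivity)
      _ ≤ α / 2 * (|x| / 2) ^ (α / 2 - 1) := by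
          rw [mul_one]
          exact mul_le_mul_of_nonneg_left (Real.rpow_le_rpow_of_nonpos hr ht (by linarith))
            (by positivity)
  have hmvt := (convex_Ici (|x| / 2)).norm_image_sub_le_of_norm_hasDerivWithin_le
    (fun t (ht : |x| / 2 ≤ t) =>
      (hasDerivAt_rpow_mul_exp_neg_half_rpow (α / 2) (hr.trans_le ht)).hasDerivWithinAt)
    hderiv_le (x := |x - y|) (y := |x|) ?_ ?_
  · calc |Kfun α (x - y) - Kfun α x| = ‖Kfun α x - Kfun α (x - y)‖ := by
          rw [Real.norm_eq_abs, abs_sub_comm]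
      _ ≤ α / 2 * (|x| / 2) ^ (α / 2 - 1) * ‖|x| - |x - y|‖ := hmvt
      _ ≤ α / 2 * (|x| / 2) ^ (α / 2 - 1) * |y| := by
          gcongr
          simpa using abs_abs_sub_abs_le x (x - y)
  · show |x| / 2 ≤ |x - y|
    linarith [abs_sub_abs_le_abs_sub x y]
  · show |x| / 2 ≤ |x|
    linarith

lemma setIntegral_abs_Kfun_sub_div_le {α x : ℝ} (hα : α ∈ Ioo 0 1) (hx : x ≠ 0) :
    ∫ y in {y : ℝ | |y| < |x| / 2}, |Kfun α (x - y) - Kfun α x| / |y| ^ (1 + α)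
      ≤ α / (1 - α) * (|x| / 2) ^ (-(α / 2)) := by
  obtain ⟨hα₀, hα₁⟩ := hα
  have hr : 0 < |x| / 2 := by positivity
  have hpointwise : ∀ y ∈ {y : ℝ | |y| < |x| / 2}, y ≠ 0 →
      |Kfun α (x - y) - Kfun α x| / |y| ^ (1 + α)
        ≤ α / 2 * (|x| / 2) ^ (α / 2 - 1) * |y| ^ (-α) := by
    intro y (hy : |y| < |x| / 2) hy₀
    have hy' : 0 < |y| := abs_pos.2 hy₀
    calc |Kfun α (x - y) - Kfun α x| / |y| ^ (1 + α)
        ≤ α / 2 * (|x| / 2) ^ (α / 2 - 1) * |y| / |y| ^ (1 + α) := by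
          gcongr
          exact abs_Kfun_sub_le hα₀.le (by linarith) hx hy.le
      _ = α / 2 * (|x| / 2) ^ (α / 2 - 1) * |y| ^ (-α) := by
          rw [Real.rpow_add hy', Real.rpow_one, Real.rpow_neg hy'.le]
          field_simp
  calc ∫ y in {y : ℝ | |y| < |x| / 2}, |Kfun α (x - y) - Kfun α x| / |y| ^ (1 + α)
      ≤ ∫ y in {y : ℝ | |y| < |x| / 2}, α / 2 * (|x| / 2) ^ (α / 2 - 1) * |y| ^ (-α) := by
        refine integral_mono_of_nonneg (ae_of_all _ fun y => by positivity)
          ((integrableOn_abs_rpow_abs_lt hr (by linarith)).const_mul _) ?_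
        filter_upwards [ae_restrict_mem (measurableSet_lt measurable_abs measurable_const),
          ae_restrict_of_ae (Measure.ae_ne volume 0)] with y hy hy₀
        exact hpointwise y hy hy₀
    _ = α / 2 * (|x| / 2) ^ (α / 2 - 1) * (2 * ((|x| / 2) ^ (-α + 1) / (-α + 1))) := by
        rw [integral_const_mul, setIntegral_abs_rpow_abs_lt hr.le (by linarith)]
    _ = α / (1 - α) * (|x| / 2) ^ (-(α / 2)) := by
        rw [show -(α / 2) = (α / 2 - 1) + (-α + 1) by ring, Real.rpow_add hr (α / 2 - 1),
          neg_add_eq_sub]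
        ring

lemma sq_setIntegral_abs_Kfun_sub_div_le {α x : ℝ} (hα : α ∈ Ioo 0 1) (hx : x ≠ 0) :
    (∫ y in {y : ℝ | |y| < |x| / 2}, |Kfun α (x - y) - Kfun α x| / |y| ^ (1 + α)) ^ 2
      ≤ (α / (1 - α)) ^ 2 * 2 ^ α * |x| ^ (-α) := by
  have hr : 0 < |x| / 2 := by positivity
  calc _ ≤ (α / (1 - α) * (|x| / 2) ^ (-(α / 2))) ^ 2 :=
        pow_le_pow_left₀ (integral_nonneg fun y => by positivity)
          (setIntegral_abs_Kfun_sub_div_le hα hx) 2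
    _ = (α / (1 - α)) ^ 2 * 2 ^ α * |x| ^ (-α) := by
        rw [mul_pow, ← Real.rpow_mul_natCast hr.le, Nat.cast_ofNat,
          show -(α / 2) * 2 = -α by ring, Real.div_rpow (abs_nonneg x) zero_le_two,
          Real.rpow_neg zero_le_two, div_inv_eq_mul]
        ring

/-- For `α ∈ (0,1)`,
`∫_{|x|<2} ( ∫_{|y|<|x|/2} |K(x−y) − K(x)| |y|^{−1−α} dy )² dx ≤ c` for a constant
`c` depending only on `α`. -/
theorem I3_bound (α : ℝ) (hα : α ∈ Ioo (0 : ℝ) 1) :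
    ∃ c : ℝ, 0 < c ∧
      ∫⁻ x in {x : ℝ | |x| < 2}, ENNReal.ofReal
          ((∫ y in {y : ℝ | |y| < |x| / 2},
              |Kfun α (x - y) - Kfun α x| / |y| ^ (1 + α)) ^ 2)
        ≤ ENNReal.ofReal c := by
  have hα₀ : 0 < α := hα.1
  have h1α : 0 < 1 - α := sub_pos.2 hα.2
  refine ⟨4 * α ^ 2 / (1 - α) ^ 3, by positivity, ?_⟩
  calc _ ≤ ∫⁻ x in {x : ℝ | |x| < 2},
          ENNReal.ofReal ((α / (1 - α)) ^ 2 * 2 ^ α * |x| ^ (-α)) := by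
        refine lintegral_mono_ae ?_
        filter_upwards [ae_restrict_of_ae (Measure.ae_ne volume 0)] with x hx
        exact ENNReal.ofReal_le_ofReal (sq_setIntegral_abs_Kfun_sub_div_le hα hx)
    _ = ENNReal.ofReal (∫ x in {x : ℝ | |x| < 2}, (α / (1 - α)) ^ 2 * 2 ^ α * |x| ^ (-α)) :=
        (ofReal_integral_eq_lintegral_ofReal
          ((integrableOn_abs_rpow_abs_lt two_pos (by linarith [hα.2])).const_mul _)
          (ae_of_all _ fun x => by positivity)).symm
    _ = ENNReal.ofReal (4 * α ^ 2 / (1 - α) ^ 3) := by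
        rw [integral_const_mul, setIntegral_abs_rpow_abs_lt zero_le_two (by linarith [hα.2]),
          Real.rpow_add two_pos, Real.rpow_neg zero_le_two, Real.rpow_one, neg_add_eq_sub]
        have : (2 : ℝ) ^ α ≠ 0 := by positivity
        congr 1
        field_simp
        ring
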